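/- arXiv:2601.15044 — 3 statements merged into one kernel-verified Lean document; each statement's English description precedes it below -/
import Mathlib

section
/- (Bollobás–Thomason inequality) Let K be a convex body in ℝⁿ and let (σ₁,…,σ_m) be an s-cover of [n]. Then vol_n(K)^s ≤ ∏_{i=1}^m vol_{|σ_i|}(P_{H_{σ_i}} K), where P_{H_τ} denotes orthogonal projection onto the coordinate subspace H_τ = span{e_i : i ∈ τ}. -/
/-!
Finner's inequality: if each `fᵢ` depends only on the coordinates in `σᵢ` and every coordinate
lies in exactly `s` of the `σᵢ`, then `∫ ∏ᵢ fᵢ ≤ ∏ᵢ (∫_{σᵢ} fᵢ ^ s) ^ (1/s)`. It is proved by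
integrating out one coordinate at a time: in coordinate `j` exactly `s` of the factors vary, so
Hölder's inequality with `s` equal exponents applies, and the others are constants. Applied to
the indicators of the projections `P_{σᵢ} K`, whose product dominates the indicator of `K`, this
gives the Bollobás–Thomason inequality.
-/

open Finset MeasureTheory

open scoped ENNReal

/-- The `|τ|`-dimensional volume of (the orthogonal projection onto the coordinate subspace
`H_τ = span{eᵢ : i ∈ τ}` of) a set `A ⊆ ℝⁿ`, computed as the Lebesgue measure of the image of
`A` under the restriction-of-coordinates map to `τ`. -/
noncomputable def coordVol {n : ℕ} (τ : Finset (Fin n)) (A : Set (Fin n → ℝ)) : ENNReal :=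
  volume ((fun (x : Fin n → ℝ) (j : {j // j ∈ τ}) => x j.1) '' A)

theorem ENNReal.lintegral_prod_le_prod_lintegral_pow_card {ι α : Type*} [MeasurableSpace α]
    {ν : Measure α} {I : Finset ι} (hI : #I ≠ 0) {g : ι → α → ℝ≥0∞}
    (hg : ∀ i ∈ I, AEMeasurable (g i) ν) :
    ∫⁻ a, ∏ i ∈ I, g i a ∂ν ≤ ∏ i ∈ I, (∫⁻ a, g i a ^ #I ∂ν) ^ ((#I : ℝ)⁻¹) := by
  have h := ENNReal.lintegral_prod_norm_pow_le I (f := fun i a => g i a ^ #I)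
    (fun i hi => (hg i hi).pow_const _) (p := fun _ => (#I : ℝ)⁻¹) (by simp [hI])
    (fun _ _ => by positivity)
  simpa only [ENNReal.pow_rpow_inv_natCast hI] using h

section Finner

variable {δ ι : Type*} [DecidableEq δ] {A : δ → Type*} [∀ j, MeasurableSpace (A j)]
  {μ : ∀ j, Measure (A j)}

theorem DependsOn.lmarginal {f : (∀ j, A j) → ℝ≥0∞} {σ : Set δ} (hf : DependsOn f σ)
    (t : Finset δ) : DependsOn (∫⋯∫⁻_t, f ∂μ) (σ \ t) :=
  fun _ _ hxy => lintegral_congr fun y => hf.updateFinset y hxy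

variable [Fintype ι] {s : ℕ} {σ : ι → Finset δ} {f : ι → (∀ j, A j) → ℝ≥0∞}

theorem lmarginal_singleton_prod_le (hs : s ≠ 0) {j : δ} (hcov : #{i | j ∈ σ i} = s)
    (hf : ∀ i, Measurable (f i)) (hdep : ∀ i, DependsOn (f i) (σ i)) (x : ∀ j, A j) :
    (∫⋯∫⁻_{j}, (fun z => ∏ i, f i z) ∂μ) x ≤
      ∏ i, ((∫⋯∫⁻_(σ i ∩ {j}), (fun z => f i z ^ s) ∂μ) x) ^ ((s : ℝ)⁻¹) := by
  classical
  set I : Finset ι := {i | j ∈ σ i} with hI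
  have hconst : ∀ i ∉ I, ∀ y, f i (Function.update x j y) = f i x := fun i hi y =>
    hdep i fun l hl => Function.update_of_ne (by rintro rfl; simp_all) _ _
  have hin : ∀ i ∈ I, (∫⋯∫⁻_(σ i ∩ {j}), (fun z => f i z ^ s) ∂μ) x
      = ∫⁻ y, f i (Function.update x j y) ^ s ∂μ j := fun i hi => by
    rw [inter_singleton_of_mem (by simpa [hI] using hi), lmarginal_singleton]
  have hout : ∀ i ∉ I, ((∫⋯∫⁻_(σ i ∩ {j}), (fun z => f i z ^ s) ∂μ) x) ^ ((s : ℝ)⁻¹) = f i x :=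
    fun i hi => by
      rw [inter_singleton_of_notMem (by simpa [hI] using hi), lmarginal_empty,
        ENNReal.pow_rpow_inv_natCast hs]
  calc (∫⋯∫⁻_{j}, (fun z => ∏ i, f i z) ∂μ) x
      = (∫⁻ y, ∏ i ∈ I, f i (Function.update x j y) ∂μ j) * ∏ i ∈ Iᶜ, f i x := by
        have hmeas : Measurable fun y => ∏ i ∈ I, f i (Function.update x j y) :=
          Finset.measurable_prod _ fun i _ => (hf i).comp (measurable_update x)
        rw [lmarginal_singleton, ← lintegral_mul_const _ hmeas]
        refine lintegral_congr fun y => ?_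
        rw [← prod_mul_prod_compl I]
        exact congrArg _ (prod_congr rfl fun i hi => hconst i (mem_compl.1 hi) y)
    _ ≤ (∏ i ∈ I, (∫⁻ y, f i (Function.update x j y) ^ s ∂μ j) ^ ((s : ℝ)⁻¹)) *
          ∏ i ∈ Iᶜ, f i x := by
        gcongr
        rw [← hcov]
        exact ENNReal.lintegral_prod_le_prod_lintegral_pow_card (hcov ▸ hs)
          fun i _ => ((hf i).comp (measurable_update _)).aemeasurable
    _ = ∏ i, ((∫⋯∫⁻_(σ i ∩ {j}), (fun z => f i z ^ s) ∂μ) x) ^ ((s : ℝ)⁻¹) := by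
        rw [← prod_mul_prod_compl I]
        congr 1
        · exact prod_congr rfl fun i hi => by rw [hin i hi]
        · exact prod_congr rfl fun i hi => (hout i (mem_compl.1 hi)).symm

theorem lmarginal_prod_le_prod_lmarginal_pow [∀ j, SigmaFinite (μ j)] (hs : s ≠ 0)
    (hcov : ∀ j, #{i | j ∈ σ i} = s) (t : Finset δ) (hf : ∀ i, Measurable (f i))
    (hdep : ∀ i, DependsOn (f i) (σ i)) (x : ∀ j, A j) :
    (∫⋯∫⁻_t, (fun z => ∏ i, f i z) ∂μ) x ≤
      ∏ i, ((∫⋯∫⁻_(σ i ∩ t), (fun z => f i z ^ s) ∂μ) x) ^ ((s : ℝ)⁻¹) := by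
  induction t using Finset.induction generalizing f x with
  | empty =>
    simp only [inter_empty, lmarginal_empty, ENNReal.pow_rpow_inv_natCast hs, le_refl]
  | @insert j t hjt ih =>
    -- `F i` is the `Lˢ`-norm of `f i` in the `j`-th coordinate; it is `f i` itself if `j ∉ σ i`
    set F : ι → (∀ j, A j) → ℝ≥0∞ :=
      fun i z => ((∫⋯∫⁻_(σ i ∩ {j}), (fun z => f i z ^ s) ∂μ) z) ^ ((s : ℝ)⁻¹)
    have hFs : ∀ i, (fun z => F i z ^ s) = ∫⋯∫⁻_(σ i ∩ {j}), (fun z => f i z ^ s) ∂μ :=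
      fun i => funext fun z => ENNReal.rpow_inv_natCast_pow hs _
    have hF : ∀ i, Measurable (F i) := fun i => (((hf i).pow_const s).lmarginal μ).pow_const _
    have hFdep : ∀ i, DependsOn (F i) (σ i) := fun i x y hxy => by
      have hfs : DependsOn (fun z => f i z ^ s) (σ i) := fun _ _ h => congrArg (· ^ s) (hdep i h)
      simp only [F, (hfs.lmarginal (σ i ∩ {j})).mono Set.sdiff_subset hxy]
    calc (∫⋯∫⁻_insert j t, (fun z => ∏ i, f i z) ∂μ) x
        = (∫⋯∫⁻_t, ∫⋯∫⁻_{j}, (fun z => ∏ i, f i z) ∂μ ∂μ) x := by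
          rw [insert_eq, union_comm, lmarginal_union μ _ (Finset.measurable_prod _ fun i _ => hf i)
            (disjoint_singleton_right.2 hjt)]
      _ ≤ (∫⋯∫⁻_t, (fun z => ∏ i, F i z) ∂μ) x :=
          lmarginal_mono (lmarginal_singleton_prod_le hs (hcov j) hf hdep) x
      _ ≤ ∏ i, ((∫⋯∫⁻_(σ i ∩ t), (fun z => F i z ^ s) ∂μ) x) ^ ((s : ℝ)⁻¹) := ih hF hFdep x
      _ = ∏ i, ((∫⋯∫⁻_(σ i ∩ insert j t), (fun z => f i z ^ s) ∂μ) x) ^ ((s : ℝ)⁻¹) := by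
          refine prod_congr rfl fun i _ => ?_
          have hdisj : Disjoint (σ i ∩ t) (σ i ∩ {j}) :=
            (disjoint_singleton_right.2 hjt).mono inter_subset_right inter_subset_right
          rw [insert_eq, union_comm, inter_union_distrib_left,
            lmarginal_union μ _ ((hf i).pow_const s) hdisj, hFs]

theorem lintegral_prod_comp_restrict_le [Fintype δ] [∀ j, SigmaFinite (μ j)] (hs : s ≠ 0)
    (hcov : ∀ j, #{i | j ∈ σ i} = s) {g : ∀ i, (∀ j : σ i, A j) → ℝ≥0∞}
    (hg : ∀ i, Measurable (g i)) :
    ∫⁻ x, ∏ i, g i ((σ i).restrict x) ∂Measure.pi μ ≤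
      ∏ i, (∫⁻ y, g i y ^ s ∂Measure.pi fun j : σ i => μ j) ^ ((s : ℝ)⁻¹) := by
  rcases isEmpty_or_nonempty (∀ j, A j) with hA | ⟨⟨x⟩⟩
  · simp
  have h := lmarginal_prod_le_prod_lmarginal_pow (μ := μ) hs hcov univ
    (f := fun i x => g i ((σ i).restrict x)) (fun i => (hg i).comp (measurable_restrict _))
    (fun i _ _ h => congrArg (g i) (dependsOn_restrict _ h)) x
  simp only [inter_univ] at h
  simpa only [lintegral_eq_lmarginal_univ x, lmarginal, Function.restrict_updateFinset] using h

theorem measure_pow_le_prod_measure_restrict_image [Fintype δ] [∀ j, SigmaFinite (μ j)]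
    (hs : s ≠ 0) (hcov : ∀ j, #{i | j ∈ σ i} = s) (K : Set (∀ j, A j))
    (hK : ∀ i, MeasurableSet ((σ i).restrict '' K)) :
    Measure.pi μ K ^ s ≤ ∏ i, Measure.pi (fun j : σ i => μ j) ((σ i).restrict '' K) := by
  set C := ⋂ i, (σ i).restrict ⁻¹' ((σ i).restrict '' K)
  have hC : MeasurableSet C := MeasurableSet.iInter fun i => measurable_restrict _ (hK i)
  have hKC : Measure.pi μ K ≤ ∫⁻ x, ∏ i, ((σ i).restrict '' K).indicator 1 ((σ i).restrict x)
      ∂Measure.pi μ := by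
    calc Measure.pi μ K ≤ Measure.pi μ C :=
          measure_mono (Set.subset_iInter fun i => Set.subset_preimage_image _ _)
      _ = _ := by
          rw [← lintegral_indicator_one hC]
          congr 1 with x
          simp only [← Set.indicator_comp_right, Pi.one_comp, prod_indicator_const_apply,
            one_pow, C, Set.iInter_true, mem_univ]
  calc Measure.pi μ K ^ s ≤ _ := pow_le_pow_left' hKC s
    _ ≤ _ := pow_le_pow_left' (lintegral_prod_comp_restrict_le hs hcov
          fun i => measurable_one.indicator (hK i)) s
    _ = _ := by
      rw [← prod_pow]
      refine prod_congr rfl fun i _ => ?_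
      rw [ENNReal.rpow_inv_natCast_pow hs, ← lintegral_indicator_one (hK i)]
      congr 1 with y
      by_cases hy : y ∈ (σ i).restrict '' K <;> simp [hy, hs]

end Finner

theorem coordVol_empty {n : ℕ} {K : Set (Fin n → ℝ)} (hK : K.Nonempty) : coordVol ∅ K = 1 := by
  rw [coordVol, (hK.image _).eq_univ, volume_pi, Measure.pi_univ]
  simp

theorem bollobas_thomason_general {n m s : ℕ} (K : Set (Fin n → ℝ))
    (hcomp : IsCompact K) (hint : (interior K).Nonempty)
    (σs : Fin m → Finset (Fin n))
    (hcov : ∀ j : Fin n, (Finset.univ.filter fun i => j ∈ σs i).card = s) :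
    (volume K) ^ s ≤ ∏ i, coordVol (σs i) K := by
  obtain rfl | hs := eq_or_ne s 0
  · have hσ : ∀ i, σs i = ∅ := fun i => eq_empty_of_forall_notMem fun j hj =>
      card_ne_zero.2 ⟨i, mem_filter.2 ⟨mem_univ i, hj⟩⟩ (hcov j)
    simp [hσ, coordVol_empty (hint.mono interior_subset)]
  · exact measure_pow_le_prod_measure_restrict_image hs hcov K
      fun i => (hcomp.image (Finset.continuous_restrict _)).isClosed.measurableSet

/-- **Bollobás–Thomason inequality.** If `K` is a convex body in `ℝⁿ` and `(σ₁,…,σ_m)` is an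
`s`-cover of `[n]`, then `vol_n(K)^s ≤ ∏ᵢ vol_{|σᵢ|}(P_{H_{σᵢ}} K)`. -/
theorem bollobas_thomason {n m s : ℕ} (K : Set (Fin n → ℝ))
    (hconv : Convex ℝ K) (hcomp : IsCompact K) (hint : (interior K).Nonempty)
    (σs : Fin m → Finset (Fin n))
    (hcov : ∀ j : Fin n, (Finset.univ.filter fun i => j ∈ σs i).card = s) :
    (volume K) ^ s ≤ ∏ i, coordVol (σs i) K :=
  bollobas_thomason_general K hcomp hint σs hcov
end

section
/- (Equality case of Berwald for conical functions) Let K be a convex body in ℝⁿ, 0 < γ₁ < γ₂, y₀ ∈ K, M > 0, and let f : K → [0,∞) be the function whose hypograph {(x,t) : x ∈ K, 0 ≤ t ≤ f(x)} equals conv(K×{0} ∪ {(y₀, M)}). Then ( C(γ₂+n,n)/vol(K) · ∫_K f^{γ₂} )^{1/γ₂} = ( C(γ₁+n,n)/vol(K) · ∫_K f^{γ₁} )^{1/γ₁}. -/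
/-! The hypograph of `f` is the cone with apex `(y₀, M)` over `K × {0}`, so for `0 < t ≤ M` the
superlevel set `{f ≥ t}` is the image of `K` under the homothety of centre `y₀` and ratio
`1 - t / M`, of volume `(1 - t / M) ^ n * vol K`. By the layer cake formula,
`∫_K f ^ γ = vol K * ∫₀^M γ t ^ (γ - 1) (1 - t / M) ^ n dt = vol K * M ^ γ / C(γ + n, n)`,
a Beta integral, so both normalized `γ`-means of `f` equal `M`. -/

open MeasureTheory Set Nat

theorem integral_pow_mul_one_sub_pow (a d : ℕ) :
    ∫ x in (0 : ℝ)..1, x ^ a * (1 - x) ^ d = (a ! * d ! : ℝ) / (a + d + 1)! := by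
  induction d generalizing a with
  | zero =>
    simp only [pow_zero, mul_one, integral_pow, factorial_zero, add_zero]
    push_cast [factorial_succ]
    field_simp
    simp
  | succ d ih =>
    have hsplit (x : ℝ) :
        x ^ a * (1 - x) ^ (d + 1) = x ^ a * (1 - x) ^ d - x ^ (a + 1) * (1 - x) ^ d := by
      ring
    simp_rw [hsplit]
    rw [intervalIntegral.integral_sub (by apply Continuous.intervalIntegrable; fun_prop)
      (by apply Continuous.intervalIntegrable; fun_prop), ih, ih,
      show a + 1 + d + 1 = a + d + 1 + 1 by ring, show a + (d + 1) + 1 = a + d + 1 + 1 by ring]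
    push_cast [factorial_succ (a + d + 1), factorial_succ a, factorial_succ d]
    field_simp
    ring

theorem integral_Ioc_one_sub_div_pow_mul_pow {M : ℝ} (hM : 0 < M) (a d : ℕ) :
    ∫ t in Ioc 0 M, (1 - t / M) ^ d * ((a + 1) * t ^ a) =
      M ^ (a + 1) / (a + 1 + d).choose d := by
  have hsubst := intervalIntegral.mul_integral_comp_mul_left (a := 0) (b := 1)
    (f := fun t => (1 - t / M) ^ d * ((a + 1) * t ^ a)) M
  rw [mul_zero, mul_one] at hsubst
  rw [← intervalIntegral.integral_of_le hM.le, ← hsubst]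
  have hscaled (x : ℝ) : (1 - M * x / M) ^ d * ((a + 1) * (M * x) ^ a)
      = ((a + 1) * M ^ a) * (x ^ a * (1 - x) ^ d) := by
    rw [mul_div_cancel_left₀ x hM.ne']; ring
  simp only [hscaled]
  rw [intervalIntegral.integral_const_mul, integral_pow_mul_one_sub_pow,
    ← Nat.choose_symm_add, Nat.cast_add_choose]
  push_cast [factorial_succ a]
  field_simp
  rw [add_right_comm a 1 d]
  ring

theorem integral_pow_eq_of_meas_le_eq {α : Type*} [MeasurableSpace α] {μ : Measure α}
    {F : α → ℝ} {M : ℝ} {V : ENNReal} {d γ : ℕ} (hM : 0 < M) (hF : AEMeasurable F μ)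
    (hF0 : 0 ≤ᵐ[μ] F) (hFM : ∀ᵐ x ∂μ, F x ≤ M)
    (hlevel : ∀ t ∈ Ioc 0 M, μ {x | t ≤ F x} = ENNReal.ofReal ((1 - t / M) ^ d) * V)
    (hγ : γ ≠ 0) :
    ∫ x, F x ^ γ ∂μ = M ^ γ / (γ + d).choose d * V.toReal := by
  obtain ⟨a, rfl⟩ := Nat.exists_eq_add_one_of_ne_zero hγ
  have hprimitive (s : ℝ) : ∫ t in 0..s, ((a : ℝ) + 1) * t ^ a = s ^ (a + 1) := by
    rw [intervalIntegral.integral_const_mul, integral_pow]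
    field_simp
    simp
  have hlayer := lintegral_comp_eq_lintegral_meas_le_mul μ hF0 hF
    (g := fun t => ((a : ℝ) + 1) * t ^ a)
    (fun t _ => (by fun_prop : Continuous _).intervalIntegrable _ _)
    ((ae_restrict_iff' measurableSet_Ioi).2 (.of_forall fun t (ht : 0 < t) => by positivity))
  simp only [hprimitive] at hlayer
  have htail (t : ℝ) (ht : t ∈ Ioi M) : μ {x | t ≤ F x} = 0 :=
    measure_mono_null (fun x (hx : t ≤ F x) => not_le.2 (lt_of_lt_of_le ht hx)) (ae_iff.1 hFM)
  have hscale_nonneg (t : ℝ) (ht : t ∈ Ioc 0 M) : 0 ≤ (1 - t / M) ^ d :=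
    pow_nonneg (sub_nonneg.2 ((div_le_one hM).2 ht.2)) _
  have hweight_nonneg (t : ℝ) (ht : t ∈ Ioc 0 M) : 0 ≤ (1 - t / M) ^ d * ((a + 1) * t ^ a) :=
    mul_nonneg (hscale_nonneg t ht) (by have := ht.1; positivity)
  have hcont : Continuous fun t : ℝ => (1 - t / M) ^ d * ((a + 1) * t ^ a) := by fun_prop
  have hlevel_integral : ∫⁻ t in Ioi 0, μ {x | t ≤ F x} * ENNReal.ofReal ((a + 1) * t ^ a)
      = ∫⁻ t in Ioc 0 M, ENNReal.ofReal ((1 - t / M) ^ d * ((a + 1) * t ^ a)) * V := by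
    rw [← Ioc_union_Ioi_eq_Ioi hM.le, lintegral_union measurableSet_Ioi (Ioc_disjoint_Ioi le_rfl),
      setLIntegral_congr_fun measurableSet_Ioi (fun t ht => by rw [htail t ht, zero_mul]),
      lintegral_zero, add_zero]
    refine setLIntegral_congr_fun measurableSet_Ioc fun t ht => ?_
    rw [hlevel t ht, mul_right_comm, ← ENNReal.ofReal_mul (hscale_nonneg t ht)]
  rw [integral_eq_lintegral_of_nonneg_ae (hF0.mono fun x hx => pow_nonneg hx _)
      (hF.pow_const _).aestronglyMeasurable, hlayer, hlevel_integral,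
    lintegral_mul_const _ hcont.measurable.ennreal_ofReal,
    ← ofReal_integral_eq_lintegral_ofReal hcont.integrableOn_Ioc
      ((ae_restrict_iff' measurableSet_Ioc).2 (.of_forall hweight_nonneg)), ENNReal.toReal_mul,
    integral_Ioc_one_sub_div_pow_mul_pow hM, ENNReal.toReal_ofReal (by positivity)]

theorem mem_convexJoin_singleton_prod_zero_iff {E : Type*} [AddCommGroup E] [Module ℝ E]
    {K : Set E} {y₀ x : E} {M t : ℝ} (hM : 0 < M) :
    (x, t) ∈ convexJoin ℝ {(y₀, M)} (K ×ˢ {0}) ↔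
      t ∈ Icc 0 M ∧ x ∈ AffineMap.homothety y₀ (1 - t / M) '' K := by
  simp only [mem_convexJoin, mem_singleton_iff, exists_eq_left, Prod.exists, mem_prod, segment,
    mem_ofPred_eq, Prod.smul_mk, Prod.mk_add_mk, Prod.mk.injEq, smul_eq_mul, mem_image,
    AffineMap.homothety_apply, vsub_eq_sub, vadd_eq_add]
  constructor
  · rintro ⟨z, _, ⟨hz, rfl⟩, a, b, ha, hb, hab, rfl, rfl⟩
    obtain rfl : a = 1 - b := by linarith
    rw [mul_zero, add_zero, mul_div_cancel_right₀ _ hM.ne', sub_sub_cancel]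
    exact ⟨⟨by positivity, by nlinarith⟩, z, hz, by module⟩
  · rintro ⟨⟨ht0, htM⟩, z, hz, rfl⟩
    refine ⟨z, 0, ⟨hz, rfl⟩, t / M, 1 - t / M, by positivity,
      sub_nonneg.2 ((div_le_one hM).2 htM), by ring, by module, ?_⟩
    rw [mul_zero, add_zero, div_mul_cancel₀ t hM.ne']

theorem convexHull_prod_zero_union_singleton {E : Type*} [AddCommGroup E] [Module ℝ E]
    {K : Set E} (hK : Convex ℝ K) (hne : K.Nonempty) (p : E × ℝ) :
    convexHull ℝ (K ×ˢ {0} ∪ {p}) = convexJoin ℝ {p} (K ×ˢ {0}) := by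
  rw [union_singleton, convexHull_insert (hne.prod (singleton_nonempty _)),
    (hK.prod (convex_singleton 0)).convexHull_eq]

def IsConicalFunction {E : Type*} [AddCommGroup E] [Module ℝ E] (K : Set E) (y₀ : E) (M : ℝ)
    (f : E → ℝ) : Prop :=
  {p : E × ℝ | p.1 ∈ K ∧ 0 ≤ p.2 ∧ p.2 ≤ f p.1} = convexJoin ℝ {(y₀, M)} (K ×ˢ {0})

namespace IsConicalFunction

variable {E : Type*} [NormedAddCommGroup E] [NormedSpace ℝ E] {K : Set E} {y₀ : E} {M : ℝ}
  {f : E → ℝ}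

theorem mem_hypograph_iff (hcone : IsConicalFunction K y₀ M f) (hM : 0 < M)
    (x : E) (t : ℝ) :
    x ∈ K ∧ 0 ≤ t ∧ t ≤ f x ↔ t ∈ Icc 0 M ∧ x ∈ AffineMap.homothety y₀ (1 - t / M) '' K := by
  rw [← mem_convexJoin_singleton_prod_zero_iff hM, ← hcone]
  rfl

theorem indicator_mem_Icc (hcone : IsConicalFunction K y₀ M f) (hM : 0 < M)
    (x : E) : K.indicator f x ∈ Icc 0 M := by
  by_cases hx : x ∈ K
  · have hf0 : 0 ≤ f x := ((hcone.mem_hypograph_iff hM x 0).2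
      ⟨left_mem_Icc.2 hM.le, by simpa [AffineMap.homothety_one] using hx⟩).2.2
    rw [indicator_of_mem hx]
    exact ((hcone.mem_hypograph_iff hM x (f x)).1 ⟨hx, hf0, le_rfl⟩).1
  · rw [indicator_of_notMem hx]
    exact left_mem_Icc.2 hM.le

theorem setOf_le_indicator_eq_image_homothety (hcone : IsConicalFunction K y₀ M f)
    (hM : 0 < M) {t : ℝ} (ht : t ∈ Ioc 0 M) :
    {x | t ≤ K.indicator f x} = AffineMap.homothety y₀ (1 - t / M) '' K := by
  ext x
  rw [mem_ofPred_eq, ← ((hcone.mem_hypograph_iff hM x t).trans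
    (and_iff_right (Ioc_subset_Icc_self ht)))]
  by_cases hx : x ∈ K
  · simp [hx, ht.1.le]
  · simp [hx, ht.1]

variable [MeasurableSpace E] [BorelSpace E]

theorem measurable_indicator (hcone : IsConicalFunction K y₀ M f) (hM : 0 < M)
    (hK : IsCompact K) : Measurable (K.indicator f) := by
  refine measurable_of_Ici fun t => ?_
  rcases le_or_gt t 0 with ht0 | ht0
  · convert MeasurableSet.univ
    exact eq_univ_of_forall fun x => ht0.trans (hcone.indicator_mem_Icc hM x).1
  rcases le_or_gt t M with htM | htM
  · change MeasurableSet {x | t ≤ K.indicator f x}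
    rw [hcone.setOf_le_indicator_eq_image_homothety hM ⟨ht0, htM⟩]
    exact (hK.image (AffineMap.homothety_continuous y₀ _)).measurableSet
  · convert MeasurableSet.empty
    exact eq_empty_of_forall_notMem fun x hx =>
      (htM.trans_le hx).not_ge (hcone.indicator_mem_Icc hM x).2

variable [FiniteDimensional ℝ E] (μ : Measure E) [μ.IsAddHaarMeasure]

theorem setIntegral_pow (hcone : IsConicalFunction K y₀ M f) (hM : 0 < M)
    (hK : IsCompact K) {γ : ℕ} (hγ : γ ≠ 0) :
    ∫ x in K, f x ^ γ ∂μ =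
      M ^ γ / (γ + Module.finrank ℝ E).choose (Module.finrank ℝ E) * (μ K).toReal := by
  have hlevel (t : ℝ) (ht : t ∈ Ioc 0 M) : μ {x | t ≤ K.indicator f x} =
      ENNReal.ofReal ((1 - t / M) ^ Module.finrank ℝ E) * μ K := by
    rw [hcone.setOf_le_indicator_eq_image_homothety hM ht, Measure.addHaar_image_homothety,
      abs_of_nonneg (pow_nonneg (sub_nonneg.2 ((div_le_one hM).2 ht.2)) _)]
  have hpow : K.indicator (fun x => f x ^ γ) = fun x => K.indicator f x ^ γ :=
    indicator_comp_of_zero (g := (· ^ γ)) (zero_pow hγ)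
  rw [← integral_indicator hK.measurableSet, hpow]
  exact integral_pow_eq_of_meas_le_eq hM
    (hcone.measurable_indicator hM hK).aemeasurable
    (.of_forall fun x => (hcone.indicator_mem_Icc hM x).1)
    (.of_forall fun x => (hcone.indicator_mem_Icc hM x).2) hlevel hγ

end IsConicalFunction

theorem berwald_equality_conical_general {n : ℕ} (K : Set (Fin n → ℝ))
    (hconv : Convex ℝ K) (hcomp : IsCompact K) (hint : (interior K).Nonempty)
    (γ₁ γ₂ : ℕ) (hγ₁ : 0 < γ₁) (hγ : γ₁ < γ₂)
    (y₀ : Fin n → ℝ) (M : ℝ) (hM : 0 < M)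
    (f : (Fin n → ℝ) → ℝ)
    (hhyp : {p : (Fin n → ℝ) × ℝ | p.1 ∈ K ∧ 0 ≤ p.2 ∧ p.2 ≤ f p.1} =
      convexHull ℝ ((K ×ˢ ({0} : Set ℝ)) ∪ {(y₀, M)})) :
    ((((γ₂ + n).choose n : ℝ) / (volume K).toReal * ∫ x in K, f x ^ γ₂) ^ ((γ₂ : ℝ)⁻¹)) =
      ((((γ₁ + n).choose n : ℝ) / (volume K).toReal * ∫ x in K, f x ^ γ₁) ^ ((γ₁ : ℝ)⁻¹)) := by
  have hcone : IsConicalFunction K y₀ M f := hhyp.trans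
    (convexHull_prod_zero_union_singleton hconv (hint.mono interior_subset) (y₀, M))
  have hvol : (volume K).toReal ≠ 0 := (ENNReal.toReal_pos
    (Measure.measure_pos_of_nonempty_interior _ hint).ne' hcomp.measure_lt_top.ne).ne'
  have hnormalized {γ : ℕ} (hγ : γ ≠ 0) :
      ((γ + n).choose n : ℝ) / (volume K).toReal * ∫ x in K, f x ^ γ = M ^ γ := by
    rw [hcone.setIntegral_pow volume hM hcomp hγ, Module.finrank_fin_fun]
    have : ((γ + n).choose n : ℝ) ≠ 0 := Nat.cast_ne_zero.2 (Nat.choose_pos (by omega)).ne'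
    field_simp
  have hγ₂ : γ₂ ≠ 0 := (hγ₁.trans hγ).ne'
  rw [hnormalized hγ₁.ne', hnormalized hγ₂, Real.pow_rpow_inv_natCast hM.le hγ₁.ne',
    Real.pow_rpow_inv_natCast hM.le hγ₂]

/-- **Equality case of Berwald's inequality for conical functions.** Let `K ⊆ ℝⁿ` be a convex
body, `0 < γ₁ < γ₂`, `y₀ ∈ K`, `M > 0`, and let `f : K → [0,∞)` be the function whose
hypograph `{(x,t) : x ∈ K, 0 ≤ t ≤ f(x)}` equals `conv(K×{0} ∪ {(y₀,M)})`. Then both sides of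
Berwald's inequality coincide. -/
theorem berwald_equality_conical {n : ℕ} (K : Set (Fin n → ℝ))
    (hconv : Convex ℝ K) (hcomp : IsCompact K) (hint : (interior K).Nonempty)
    (γ₁ γ₂ : ℕ) (hγ₁ : 0 < γ₁) (hγ : γ₁ < γ₂)
    (y₀ : Fin n → ℝ) (hy₀ : y₀ ∈ K) (M : ℝ) (hM : 0 < M)
    (f : (Fin n → ℝ) → ℝ) (hf0 : ∀ x ∈ K, 0 ≤ f x)
    (hhyp : {p : (Fin n → ℝ) × ℝ | p.1 ∈ K ∧ 0 ≤ p.2 ∧ p.2 ≤ f p.1} =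
      convexHull ℝ ((K ×ˢ ({0} : Set ℝ)) ∪ {(y₀, M)})) :
    ((((γ₂ + n).choose n : ℝ) / (volume K).toReal * ∫ x in K, f x ^ γ₂) ^ ((γ₂ : ℝ)⁻¹)) =
      ((((γ₁ + n).choose n : ℝ) / (volume K).toReal * ∫ x in K, f x ^ γ₁) ^ ((γ₁ : ℝ)⁻¹)) :=
  berwald_equality_conical_general K hconv hcomp hint γ₁ γ₂ hγ₁ hγ y₀ M hM f hhyp
end

section
/- (Conical sections lemma) Let K be a convex body in ℝⁿ, H an i-dimensional subspace of ℝⁿ, and define f : P_H K → [0,∞) by f(y) := vol_{n−i}(K ∩ (y + H^⊥))^{1/(n−i)}, which is concave by Brunn–Minkowski. Suppose there is y₀ ∈ P_H K such that the hypograph of f equals conv(P_H K × {0}, (y₀, ‖f‖_∞)). Then for every y ∈ P_H K there is z(y) ∈ ℝⁿ such that K ∩ (y + H^⊥) = z(y) + (1 − ‖y − y₀‖_{P_H K}) · (K ∩ (y₀ + H^⊥)), where ‖x‖_C := min{λ ≥ 0 : x ∈ λC} is the Minkowski functional (here applied to y − y₀ with respect to the translated body P_H K − y₀; the statement uses ‖y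 − y₀‖_{P_H K} as in the paper). -/
/-!
Write `S u ⊆ Hᗮ` for the section of `K` over `u ∈ P_H K` and `g u` for the gauge of `u - y₀`.
The hypothesis on the hypograph says that `f` is the cone profile `f u = f y₀ (1 - g u)`, i.e.
`vol (S u) = (1 - g u)^(n-i) vol (S y₀)`. Writing `u = (1 - t) y₀ + t p` with `t = g u` and
`p ∈ P_H K` (the gauge of a compact set is attained), convexity of `K` gives
`(1 - t) S y₀ + t w ⊆ S u` for every `w ∈ S p`. For `t < 1` both sides are convex with the same
finite positive volume and the smaller one is closed, so they coincide. For `t = 1` the volume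
argument degenerates; there `S u` is a point, because for every `s < 1` the set
`s S u + (1 - s) S y₀` lies in a translate of `(1 - s) S y₀`, whose diameter tends to `0`.
-/

open MeasureTheory Metric Set Filter Topology
open scoped Pointwise

section Gauge

variable {E : Type*} [NormedAddCommGroup E] [NormedSpace ℝ E] {C : Set E}

theorem StarConvex.smul_set_subset_smul_set (hC : StarConvex ℝ 0 C) {r s : ℝ} (hr : 0 < r)
    (hrs : r ≤ s) : r • C ⊆ s • C := by
  rintro _ ⟨c, hc, rfl⟩
  have hs : 0 < s := hr.trans_le hrs
  refine ⟨(r / s) • c, hC.smul_mem hc (by positivity) ((div_le_one hs).mpr hrs), ?_⟩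
  simp only [smul_smul, mul_div_cancel₀ r hs.ne']

theorem IsCompact.mem_gauge_smul (hCc : IsCompact C) (hC : Convex ℝ C) (h0 : (0 : E) ∈ C)
    {x : E} (hx : x ∈ C) : x ∈ gauge C x • C := by
  have : CompactSpace C := isCompact_iff_compactSpace.mp hCc
  have hclosed : IsClosed {s : ℝ | x ∈ s • C} := by
    have : {s : ℝ | x ∈ s • C} = Prod.fst '' {p : ℝ × C | p.1 • (p.2 : E) = x} := by
      ext s; simp [mem_smul_set]
    exact this ▸ isClosedMap_fst_of_compactSpace _ (isClosed_eq (by fun_prop) continuous_const)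
  have habove : Ioi (gauge C x) ⊆ {s : ℝ | x ∈ s • C} := by
    intro s hs
    rw [mem_Ioi, gauge_def] at hs
    have h1 : (1 : ℝ) ∈ {r | r ∈ Ioi 0 ∧ x ∈ r • C} := ⟨mem_Ioi.mpr one_pos, by rwa [one_smul]⟩
    obtain ⟨r, ⟨hr, hxr⟩, hrs⟩ := exists_lt_of_csInf_lt ⟨1, h1⟩ hs
    exact (hC.starConvex h0).smul_set_subset_smul_set hr hrs.le hxr
  exact hclosed.closure_subset_iff.mpr habove (by rw [closure_Ioi]; exact self_mem_Ici)

theorem IsCompact.exists_gauge_smul_sub_eq {P : Set E} (hPc : IsCompact P) (hP : Convex ℝ P)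
    {y₀ u : E} (hy₀ : y₀ ∈ P) (hu : u ∈ P) :
    ∃ p ∈ P, gauge ((fun x => x - y₀) '' P) (u - y₀) • (p - y₀) = u - y₀ := by
  have hC : Convex ℝ ((fun x => x - y₀) '' P) := by
    simpa only [sub_singleton] using hP.sub (convex_singleton y₀)
  obtain ⟨_, ⟨p, hp, rfl⟩, hup⟩ :=
    (hPc.image (by fun_prop)).mem_gauge_smul hC ⟨y₀, hy₀, sub_self y₀⟩ ⟨u, hu, rfl⟩
  exact ⟨p, hp, hup⟩

theorem eq_mul_one_sub_gauge_of_hypograph_eq_convexHull {P : Set E} (hPc : IsCompact P)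
    (hP : Convex ℝ P) {y₀ : E} (hy₀ : y₀ ∈ P) {M : ℝ} {f : E → ℝ}
    (h : {q : E × ℝ | q.1 ∈ P ∧ 0 ≤ q.2 ∧ q.2 ≤ f q.1} =
      convexHull ℝ ((P ×ˢ ({0} : Set ℝ)) ∪ {(y₀, M)}))
    {u : E} (hu : u ∈ P) : f u = M * (1 - gauge ((fun x => x - y₀) '' P) (u - y₀)) := by
  have hbase : ∀ p ∈ P, ((p, 0) : E × ℝ) ∈ convexHull ℝ ((P ×ˢ ({0} : Set ℝ)) ∪ {(y₀, M)}) :=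
    fun p hp => subset_convexHull ℝ _ (Or.inl ⟨hp, rfl⟩)
  have hapex : ((y₀, M) : E × ℝ) ∈ convexHull ℝ ((P ×ˢ ({0} : Set ℝ)) ∪ {(y₀, M)}) :=
    subset_convexHull ℝ _ (Or.inr rfl)
  set t := gauge ((fun x => x - y₀) '' P) (u - y₀)
  have ht1 : t ≤ 1 := gauge_le_one_of_mem ⟨u, hu, rfl⟩
  have hM : 0 ≤ M := (h ▸ hapex : _).2.1
  apply le_antisymm
  · have hjoin : convexHull ℝ ((P ×ˢ ({0} : Set ℝ)) ∪ {(y₀, M)}) =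
        convexJoin ℝ {(y₀, M)} (P ×ˢ ({0} : Set ℝ)) := by
      rw [union_singleton, convexHull_insert (⟨(y₀, 0), hy₀, rfl⟩ : (P ×ˢ ({0} : Set ℝ)).Nonempty),
        (hP.prod (convex_singleton (0 : ℝ))).convexHull_eq]
    have hfu : (u, f u) ∈ convexJoin ℝ {((y₀, M) : E × ℝ)} (P ×ˢ ({0} : Set ℝ)) := by
      rw [← hjoin, ← h]; exact ⟨hu, (h ▸ hbase u hu : _).2.2, le_rfl⟩
    obtain ⟨_, rfl, ⟨c, _⟩, ⟨hc, rfl⟩, a, b, ha, hb, hab, hq⟩ := mem_convexJoin.mp hfu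
    simp only [Prod.smul_mk, Prod.mk_add_mk, smul_eq_mul, mul_zero, add_zero, Prod.mk.injEq] at hq
    obtain rfl : a = 1 - b := eq_sub_of_add_eq hab
    have htb : t ≤ b := gauge_le_of_mem hb ⟨c - y₀, ⟨c, hc, rfl⟩, by rw [← hq.1]; module⟩
    rw [← hq.2]
    nlinarith
  · obtain ⟨p, hp, hup⟩ := hPc.exists_gauge_smul_sub_eq hP hy₀ hu
    have hcone : ((u, (1 - t) * M) : E × ℝ) ∈
        convexHull ℝ ((P ×ˢ ({0} : Set ℝ)) ∪ {(y₀, M)}) := by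
      convert (convex_convexHull ℝ _) hapex (hbase p hp) (sub_nonneg.mpr ht1) (gauge_nonneg _)
        (sub_add_cancel 1 t) using 1
      ext
      · change u = (1 - t) • y₀ + t • p
        linear_combination (norm := module) -hup
      · simp
    rw [mul_comm]
    exact (h ▸ hcone : _).2.2

end Gauge

section Haar

variable {E : Type*} [NormedAddCommGroup E] [NormedSpace ℝ E] [MeasurableSpace E] [BorelSpace E]
  [FiniteDimensional ℝ E] (μ : Measure E) [μ.IsAddHaarMeasure] {A B : Set E}

theorem Convex.eq_of_subset_of_measure_le (hB : Convex ℝ B) (hA : IsClosed A) (hAB : A ⊆ B)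
    (hA0 : μ A ≠ 0) (hAfin : μ A ≠ ⊤) (hBA : μ B ≤ μ A) : B = A := by
  have hdiff : μ (B \ A) = 0 := by
    rw [measure_sdiff hAB hA.nullMeasurableSet hAfin, tsub_eq_zero_of_le hBA]
  have hint : interior B ⊆ A := by
    have := (isOpen_interior.sdiff hA).measure_eq_zero_iff μ |>.mp <|
      measure_mono_null (sdiff_subset_sdiff_left interior_subset) hdiff
    exact sdiff_eq_empty.mp this
  have hne : (interior B).Nonempty := by
    by_contra h
    have hfr : B ⊆ frontier B := by
      rw [frontier, not_nonempty_iff_eq_empty.mp h, sdiff_empty]; exact subset_closure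
    exact hA0 (measure_mono_null (hAB.trans hfr) (hB.addHaar_frontier μ))
  refine hAB.antisymm' fun b hb => hA.closure_subset_iff.mpr hint ?_
  rw [hB.closure_interior_eq_closure_of_nonempty_interior hne]
  exact subset_closure hb

end Haar

section Slice

variable {E : Type*} [AddCommGroup E] [Module ℝ E] {K : Set E} {V : Submodule ℝ E}

/-- The section `K ∩ (u + V)`, as a subset of `V`. -/
def slice (K : Set E) (V : Submodule ℝ E) (u : E) : Set V := {v | u + (v : E) ∈ K}

theorem image_slice (u : E) :
    (fun v : V => u + (v : E)) '' slice K V u = K ∩ (fun v : E => u + v) '' (V : Set E) := by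
  ext x
  constructor
  · rintro ⟨v, hv, rfl⟩
    exact ⟨hv, v, v.2, rfl⟩
  · rintro ⟨hx, v, hv, rfl⟩
    exact ⟨⟨v, hv⟩, hx, rfl⟩

theorem inter_image_add_eq_of_slice_eq_vadd_smul {y y₀ : E} {w : V} {c : ℝ}
    (h : slice K V y = w +ᵥ c • slice K V y₀) :
    K ∩ (fun v : E => y + v) '' (V : Set E) =
      (fun v => y + w - c • y₀ + c • v) '' (K ∩ (fun v : E => y₀ + v) '' (V : Set E)) := by
  rw [← image_slice, ← image_slice, h, ← image_smul, ← image_vadd, image_image, image_image,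
    image_image]
  refine image_congr fun v _ => ?_
  simp only [vadd_eq_add, Submodule.coe_add, Submodule.coe_smul]
  module

theorem Convex.smul_slice_add_smul_slice_subset (hK : Convex ℝ K) {x y : E} {a b : ℝ}
    (ha : 0 ≤ a) (hb : 0 ≤ b) (hab : a + b = 1) :
    a • slice K V x + b • slice K V y ⊆ slice K V (a • x + b • y) := by
  rintro _ ⟨_, ⟨v, hv, rfl⟩, _, ⟨v', hv', rfl⟩, rfl⟩
  have := hK hv hv' ha hb hab
  simp only [slice, mem_ofPred_eq, Submodule.coe_add, Submodule.coe_smul] at this ⊢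
  convert this using 1
  module

theorem convex_slice (hK : Convex ℝ K) (u : E) : Convex ℝ (slice K V u) := by
  intro v hv v' hv' a b ha hb hab
  simpa only [← add_smul, hab, one_smul] using
    hK.smul_slice_add_smul_slice_subset (x := u) (y := u) ha hb hab
      (add_mem_add (smul_mem_smul_set hv) (smul_mem_smul_set hv'))

end Slice

theorem nonpos_of_forall_mul_le_one_sub_mul {x R : ℝ}
    (h : ∀ s ∈ Ioo (0 : ℝ) 1, s * x ≤ (1 - s) * R) : x ≤ 0 := by
  have hlim : Tendsto (fun s : ℝ => (1 - s) * R - s * x) (𝓝[<] 1) (𝓝 ((1 - 1) * R - 1 * x)) :=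
    (Continuous.tendsto (by fun_prop) 1).mono_left nhdsWithin_le_nhds
  have := ge_of_tendsto hlim <| eventually_of_mem (Ioo_mem_nhdsLT zero_lt_one) fun s hs =>
    sub_nonneg.mpr (h s hs)
  linarith

section SliceTopology

variable {E : Type*} [NormedAddCommGroup E] [NormedSpace ℝ E] {K : Set E} {V : Submodule ℝ E}

theorem isCompact_slice (hK : IsCompact K) (hV : IsClosed (V : Set E)) (u : E) :
    IsCompact (slice K V u) :=
  ((Homeomorph.addLeft u).isClosedEmbedding.comp hV.isClosedEmbedding_subtypeVal).isCompact_preimage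
    hK

theorem measure_slice_ne_zero_of_mem_interior [MeasurableSpace V] (μ : Measure V)
    [μ.IsOpenPosMeasure] {u : E} {v : V} (h : u + (v : E) ∈ interior K) :
    μ (slice K V u) ≠ 0 := by
  have hU : IsOpen ((fun v' : V => u + (v' : E)) ⁻¹' interior K) :=
    isOpen_interior.preimage (by fun_prop)
  exact fun h0 => hU.measure_ne_zero μ ⟨v, h⟩ (measure_mono_null (preimage_mono interior_subset) h0)

theorem Convex.slice_subsingleton_of_forall_eq_vadd_smul (hK : Convex ℝ K) {y₀ y : E}
    (hb : Bornology.IsBounded (slice K V y₀)) (hne : (slice K V y₀).Nonempty)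
    (h : ∀ s ∈ Ioo (0 : ℝ) 1, ∃ w : V,
      slice K V ((1 - s) • y₀ + s • y) = w +ᵥ (1 - s) • slice K V y₀) :
    (slice K V y).Subsingleton := by
  intro a ha b hb'
  obtain ⟨k, hk⟩ := hne
  rw [← sub_eq_zero, ← norm_le_zero_iff]
  refine nonpos_of_forall_mul_le_one_sub_mul (R := diam (slice K V y₀)) fun s hs => ?_
  obtain ⟨w, hw⟩ := h s hs
  have hmem : ∀ c ∈ slice K V y, ∃ k' ∈ slice K V y₀, w + (1 - s) • k' = (1 - s) • k + s • c := by
    intro c hc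
    have := hK.smul_slice_add_smul_slice_subset (sub_nonneg.2 hs.2.le) hs.1.le
      (sub_add_cancel 1 s) (add_mem_add (smul_mem_smul_set hk) (smul_mem_smul_set hc))
    rw [hw] at this
    obtain ⟨_, ⟨k', hk', rfl⟩, heq⟩ := this
    exact ⟨k', hk', heq⟩
  obtain ⟨ka, hka, hea⟩ := hmem a ha
  obtain ⟨kb, hkb, heb⟩ := hmem b hb'
  have hdiff : s • (a - b) = (1 - s) • (ka - kb) := by
    linear_combination (norm := module) heb - hea
  calc s * ‖a - b‖ = ‖s • (a - b)‖ := by rw [norm_smul, Real.norm_of_nonneg hs.1.le]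
    _ = (1 - s) * ‖ka - kb‖ := by rw [hdiff, norm_smul, Real.norm_of_nonneg (sub_nonneg.2 hs.2.le)]
    _ ≤ (1 - s) * diam (slice K V y₀) := by
      rw [← dist_eq_norm]
      exact mul_le_mul_of_nonneg_left (dist_le_diam_of_mem hb hka hkb) (sub_nonneg.2 hs.2.le)

end SliceTopology

section ConicalSlices

variable {E : Type*} [NormedAddCommGroup E] [NormedSpace ℝ E] {K : Set E} {V : Submodule ℝ E}
  [FiniteDimensional ℝ V] [MeasurableSpace V] [BorelSpace V] (μ : Measure V)
  [μ.IsAddHaarMeasure]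

theorem slice_eq_vadd_smul_of_measure_le (hK : Convex ℝ K) (hKc : IsCompact K) {y₀ p : E}
    {w : V} (hw : w ∈ slice K V p) {t : ℝ} (ht0 : 0 ≤ t) (ht1 : t < 1)
    (h0 : μ (slice K V y₀) ≠ 0)
    (hle : μ (slice K V ((1 - t) • y₀ + t • p)) ≤
      ENNReal.ofReal ((1 - t) ^ Module.finrank ℝ V) * μ (slice K V y₀)) :
    slice K V ((1 - t) • y₀ + t • p) = t • w +ᵥ (1 - t) • slice K V y₀ := by
  have hS : IsCompact (slice K V y₀) := isCompact_slice hKc V.closed_of_finiteDimensional y₀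
  have hμ : μ (t • w +ᵥ (1 - t) • slice K V y₀) =
      ENNReal.ofReal ((1 - t) ^ Module.finrank ℝ V) * μ (slice K V y₀) := by
    rw [measure_vadd, Measure.addHaar_smul_of_nonneg μ (sub_nonneg.2 ht1.le)]
  refine (convex_slice hK _).eq_of_subset_of_measure_le μ ?_ ?_ ?_ ?_ (hμ ▸ hle)
  · exact ((hS.smul (1 - t)).vadd (t • w)).isClosed
  · rintro _ ⟨_, ⟨v, hv, rfl⟩, rfl⟩
    change t • w + (1 - t) • v ∈ _
    rw [add_comm (t • w)]
    exact hK.smul_slice_add_smul_slice_subset (sub_nonneg.2 ht1.le) ht0 (sub_add_cancel 1 t)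
      (add_mem_add (smul_mem_smul_set hv) (smul_mem_smul_set hw))
  · rw [hμ]
    exact mul_ne_zero (by simpa using pow_pos (sub_pos.2 ht1) _) h0
  · rw [hμ]
    exact ENNReal.mul_ne_top ENNReal.ofReal_ne_top hS.measure_lt_top.ne

theorem exists_slice_eq_vadd_smul_of_measure_eq (hK : Convex ℝ K) (hKc : IsCompact K)
    {P : Set E} (hPc : IsCompact P) (hP : Convex ℝ P) {y₀ : E} (hy₀ : y₀ ∈ P)
    (hne : ∀ u ∈ P, (slice K V u).Nonempty) (h0 : μ (slice K V y₀) ≠ 0)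
    (hμ : ∀ u ∈ P, μ (slice K V u) = ENNReal.ofReal
      ((1 - gauge ((fun x => x - y₀) '' P) (u - y₀)) ^ Module.finrank ℝ V) * μ (slice K V y₀))
    {u : E} (hu : u ∈ P) :
    ∃ w : V, slice K V u = w +ᵥ (1 - gauge ((fun x => x - y₀) '' P) (u - y₀)) • slice K V y₀ := by
  set C := (fun x => x - y₀) '' P
  have hinner : ∀ u ∈ P, gauge C (u - y₀) < 1 →
      ∃ w : V, slice K V u = w +ᵥ (1 - gauge C (u - y₀)) • slice K V y₀ := by
    intro u hu hlt
    obtain ⟨p, hp, hup⟩ := hPc.exists_gauge_smul_sub_eq hP hy₀ hu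
    obtain ⟨w, hw⟩ := hne p hp
    set t := gauge C (u - y₀)
    have hu' : (1 - t) • y₀ + t • p = u := by linear_combination (norm := module) hup
    refine ⟨t • w, ?_⟩
    have := slice_eq_vadd_smul_of_measure_le μ hK hKc hw (gauge_nonneg _) hlt h0
      (by rw [hu']; exact (hμ u hu).le)
    rwa [hu'] at this
  rcases (gauge_le_one_of_mem ⟨u, hu, rfl⟩ : gauge C (u - y₀) ≤ 1).lt_or_eq with hlt | heq
  · exact hinner u hu hlt
  obtain ⟨a, ha⟩ := hne u hu
  refine ⟨a, ?_⟩
  rw [heq, sub_self, zero_smul_set (hne y₀ hy₀), ← singleton_zero, vadd_set_singleton,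
    vadd_eq_add, add_zero]
  refine (hK.slice_subsingleton_of_forall_eq_vadd_smul
    (isCompact_slice hKc V.closed_of_finiteDimensional y₀).isBounded (hne y₀ hy₀)
    fun s hs => ?_).eq_singleton_of_mem ha
  have hg : gauge C ((1 - s) • y₀ + s • u - y₀) = s := by
    rw [show (1 - s) • y₀ + s • u - y₀ = s • (u - y₀) by module,
      gauge_smul_of_nonneg hs.1.le, heq, smul_eq_mul, mul_one]
  have hus : (1 - s) • y₀ + s • u ∈ P :=
    hP hy₀ hu (sub_nonneg.2 hs.2.le) hs.1.le (sub_add_cancel 1 s)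
  simpa only [hg] using hinner _ hus (by rw [hg]; exact hs.2)

end ConicalSlices

/-- **Conical sections lemma.** Let `K ⊆ ℝⁿ` be a convex body, `H` an `i`-dimensional
subspace, and `f(y) := vol_{n−i}(K ∩ (y + H^⊥))^{1/(n−i)}` on `P_H K`. If there is
`y₀ ∈ P_H K` such that the hypograph of `f` equals `conv(P_H K × {0}, (y₀, ‖f‖_∞))`, then
every section `K ∩ (y + H^⊥)` is a translate of
`(1 − ‖y − y₀‖_{P_H K − y₀}) · (K ∩ (y₀ + H^⊥))`, where `‖·‖_C` is the Minkowski
functional (gauge). -/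
theorem conical_sections {n i : ℕ} (K : Set (EuclideanSpace ℝ (Fin n)))
    (hconv : Convex ℝ K) (hcomp : IsCompact K) (hint : (interior K).Nonempty)
    (H : Submodule ℝ (EuclideanSpace ℝ (Fin n))) (hH : Module.finrank ℝ H = i)
    (PHK : Set (EuclideanSpace ℝ (Fin n)))
    (hPHK : PHK = (fun x => (H.orthogonalProjectionOnto x : EuclideanSpace ℝ (Fin n))) '' K)
    (f : EuclideanSpace ℝ (Fin n) → ℝ)
    (hf : f = fun y =>
      (volume {h : Hᗮ | y + (h : EuclideanSpace ℝ (Fin n)) ∈ K}).toReal ^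
        (((n - i : ℕ) : ℝ)⁻¹))
    (y₀ : EuclideanSpace ℝ (Fin n)) (hy₀ : y₀ ∈ PHK)
    (hhyp : {p : EuclideanSpace ℝ (Fin n) × ℝ | p.1 ∈ PHK ∧ 0 ≤ p.2 ∧ p.2 ≤ f p.1} =
      convexHull ℝ ((PHK ×ˢ ({0} : Set ℝ)) ∪ {(y₀, sSup (f '' PHK))})) :
    ∀ y ∈ PHK, ∃ z : EuclideanSpace ℝ (Fin n),
      K ∩ ((fun h : EuclideanSpace ℝ (Fin n) => y + h) '' (Hᗮ : Set (EuclideanSpace ℝ (Fin n)))) =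
        (fun v => z + (1 - gauge ((fun x => x - y₀) '' PHK) (y - y₀)) • v) ''
          (K ∩ ((fun h : EuclideanSpace ℝ (Fin n) => y₀ + h) ''
            (Hᗮ : Set (EuclideanSpace ℝ (Fin n))))) := by
  intro y hy
  have hne : ∀ u ∈ PHK, (slice K Hᗮ u).Nonempty := by
    rw [hPHK]
    rintro _ ⟨x, hx, rfl⟩
    exact ⟨⟨_, H.sub_starProjection_mem_orthogonal x⟩, by simpa [slice] using hx⟩
  suffices ∃ w : Hᗮ, slice K Hᗮ y =
      w +ᵥ (1 - gauge ((fun x => x - y₀) '' PHK) (y - y₀)) • slice K Hᗮ y₀ by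
    obtain ⟨w, hw⟩ := this
    exact ⟨_, inter_image_add_eq_of_slice_eq_vadd_smul hw⟩
  have hd : Module.finrank ℝ Hᗮ = n - i := by
    have := H.finrank_add_finrank_orthogonal
    rw [hH, finrank_euclideanSpace_fin] at this
    omega
  rcases (n - i).eq_zero_or_pos with hd0 | hdpos
  · have : Subsingleton Hᗮ := Module.finrank_zero_iff.mp (hd.trans hd0)
    exact ⟨0, (hne y hy).eq_univ.trans ((hne y₀ hy₀).smul_set.vadd_set).eq_univ.symm⟩
  have hPc : IsCompact PHK := hPHK ▸ hcomp.image (by fun_prop)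
  have hP : Convex ℝ PHK := hPHK ▸ hconv.linear_image (H.subtype ∘ₗ H.orthogonalProjectionOnto)
  have hprofile := fun u (hu : u ∈ PHK) =>
    eq_mul_one_sub_gauge_of_hypograph_eq_convexHull hPc hP hy₀ hhyp hu
  have hf_pow : ∀ u, ENNReal.ofReal (f u ^ (n - i)) = volume (slice K Hᗮ u) := fun u => by
    rw [hf, Real.rpow_inv_natCast_pow ENNReal.toReal_nonneg hdpos.ne']
    exact ENNReal.ofReal_toReal (isCompact_slice hcomp H.isClosed_orthogonal u).measure_lt_top.ne
  have hμ : ∀ u ∈ PHK, volume (slice K Hᗮ u) = ENNReal.ofReal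
      ((1 - gauge ((fun x => x - y₀) '' PHK) (u - y₀)) ^ Module.finrank ℝ Hᗮ) *
        volume (slice K Hᗮ y₀) := fun u hu => by
    have hg : gauge ((fun x => x - y₀) '' PHK) (u - y₀) ≤ 1 := gauge_le_one_of_mem ⟨u, hu, rfl⟩
    rw [← hf_pow, ← hf_pow, ← ENNReal.ofReal_mul (pow_nonneg (sub_nonneg.2 hg) _), hprofile u hu,
      hprofile y₀ hy₀, sub_self, gauge_zero, sub_zero, mul_one, mul_pow, hd, mul_comm]
  obtain ⟨x, hx⟩ := hint
  have h0 : volume (slice K Hᗮ y₀) ≠ 0 := by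
    have hxP : H.starProjection x ∈ PHK := hPHK ▸ ⟨x, interior_subset hx, rfl⟩
    refine right_ne_zero_of_mul (hμ _ hxP ▸ measure_slice_ne_zero_of_mem_interior volume
      (v := ⟨_, H.sub_starProjection_mem_orthogonal x⟩) ?_)
    simpa
  exact exists_slice_eq_vadd_smul_of_measure_eq volume hconv hcomp hPc hP hy₀ hne h0 hμ hy
end
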